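/- arXiv:0911.3713 — 3 statements merged into one kernel-verified Lean document; each statement's English description precedes it below -/
import Mathlib

section
/- If f, g : ℝ → ℝ are almost periodic functions, then the function t ↦ f(t − g(t)) is almost periodic. -/
/-!
Bochner's criterion: a uniformly continuous `f` is almost periodic iff its translates
`f (· + h)` form a totally bounded set for the topology of uniform convergence. Continuous
almost periodic functions are uniformly continuous, and a product of totally bounded sets is
totally bounded, so the pair `(f, g)` is almost periodic: `f` and `g` have relatively dense
common `ε`-almost periods `T`. For such a `T`, `f (t + T - g (t + T))` is close to
`f (t + T - g t)` by uniform continuity of `f`, and that is close to `f (t - g t)`.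
-/

open Set Filter UniformConvergence

theorem TotallyBounded.prod {α β : Type*} [UniformSpace α] [UniformSpace β] {s : Set α}
    {t : Set β} (hs : TotallyBounded s) (ht : TotallyBounded t) : TotallyBounded (s ×ˢ t) := by
  rw [totallyBounded_iff_ultrafilter] at *
  intro u hu
  have hu' : ∀ᶠ p in (u : Filter (α × β)), p.1 ∈ s ∧ p.2 ∈ t := le_principal_iff.mp hu
  have hfst := hs (u.map Prod.fst) (le_principal_iff.mpr (hu'.mono fun _ => And.left))
  have hsnd := ht (u.map Prod.snd) (le_principal_iff.mpr (hu'.mono fun _ => And.right))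
  exact (hfst.prod hsnd).mono le_prod_map_fst_snd

section AlmostPeriodic

variable {E F : Type*} [PseudoMetricSpace E] [PseudoMetricSpace F]

def AlmostPeriodic (f : ℝ → E) : Prop :=
  ∀ ε > 0, ∃ l > 0, ∀ x : ℝ, ∃ T ∈ Icc x (x + l), ∀ t, dist (f (t + T)) (f t) < ε

def uniformTranslate (f : ℝ → E) (h : ℝ) : ℝ →ᵤ E :=
  UniformFun.ofFun fun t => f (t + h)

theorem UniformContinuous.uniformContinuous_uniformTranslate {f : ℝ → E}
    (hf : UniformContinuous f) : UniformContinuous (uniformTranslate f) := by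
  refine uniformEquicontinuous_iff_uniformContinuous (F := fun t h => f (t + h)) |>.mp ?_
  rw [Metric.uniformEquicontinuous_iff]
  intro ε hε
  obtain ⟨δ, hδ, hδf⟩ := Metric.uniformContinuous_iff.mp hf ε hε
  exact ⟨δ, hδ, fun x y hxy t => hδf (by rwa [dist_add_left])⟩

theorem AlmostPeriodic.uniformContinuous {f : ℝ → E} (hap : AlmostPeriodic f)
    (hf : Continuous f) : UniformContinuous f := by
  rw [Metric.uniformContinuous_iff]
  intro ε hε
  obtain ⟨l, -, hT⟩ := hap (ε / 3) (by positivity)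
  obtain ⟨δ, hδ, hδf⟩ := Metric.uniformContinuousOn_iff.mp
    ((isCompact_Icc (a := -1) (b := l + 1)).uniformContinuousOn_of_continuous hf.continuousOn)
    (ε / 3) (by positivity)
  refine ⟨min δ 1, by positivity, fun {u v} huv => ?_⟩
  -- An almost period moves `u` into `[0, l]`, where `f` is uniformly continuous.
  obtain ⟨T, ⟨hT₀, hTl⟩, hTf⟩ := hT (-u)
  have huv_abs := abs_sub_lt_iff.mp (Real.dist_eq u v ▸ huv.trans_le (min_le_right _ _))
  have hshift : dist (u + T) (v + T) < δ := by
    rw [dist_add_right]; exact huv.trans_le (min_le_left _ _)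
  calc dist (f u) (f v)
      ≤ dist (f u) (f (u + T)) + dist (f (u + T)) (f (v + T)) + dist (f (v + T)) (f v) :=
        dist_triangle4 _ _ _ _
    _ < ε / 3 + ε / 3 + ε / 3 := by
        gcongr
        · rw [dist_comm]; exact hTf u
        · exact hδf _ ⟨by linarith, by linarith⟩ _ ⟨by linarith, by linarith⟩ hshift
        · exact hTf v
    _ = ε := by ring

theorem AlmostPeriodic.totallyBounded_range_uniformTranslate {f : ℝ → E}
    (hap : AlmostPeriodic f) (hf : UniformContinuous f) :
    TotallyBounded (range (uniformTranslate f)) := by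
  have hbasis := UniformFun.hasBasis_uniformity_of_basis ℝ E Metric.uniformity_basis_dist
  rw [hbasis.totallyBounded_iff]
  intro ε hε
  obtain ⟨l, -, hT⟩ := hap (ε / 2) (by positivity)
  have hK : TotallyBounded (uniformTranslate f '' Icc 0 l) :=
    (totallyBounded_Icc 0 l).image hf.uniformContinuous_uniformTranslate
  obtain ⟨N, hNfin, hN⟩ := hbasis.totallyBounded_iff.mp hK (ε / 2) (by positivity)
  refine ⟨N, hNfin, ?_⟩
  rintro _ ⟨h, rfl⟩
  -- Each translate is close to a translate by a shift `h + T ∈ [0, l]`.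
  obtain ⟨T, ⟨hT₀, hTl⟩, hTf⟩ := hT (-h)
  obtain ⟨y, hy, hhy⟩ := mem_iUnion₂.mp (hN ⟨h + T, ⟨by linarith, by linarith⟩, rfl⟩)
  refine mem_iUnion₂.mpr ⟨y, hy, fun t => ?_⟩
  calc dist (f (t + h)) (UniformFun.toFun y t)
      ≤ dist (f (t + h)) (f (t + (h + T))) + dist (f (t + (h + T))) (UniformFun.toFun y t) :=
        dist_triangle _ _ _
    _ < ε / 2 + ε / 2 := by
        gcongr
        · rw [dist_comm, ← add_assoc]; exact hTf (t + h)
        · exact hhy t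
    _ = ε := add_halves ε

theorem almostPeriodic_of_totallyBounded_range_uniformTranslate {f : ℝ → E}
    (htb : TotallyBounded (range (uniformTranslate f))) : AlmostPeriodic f := by
  intro ε hε
  have hbasis := UniformFun.hasBasis_uniformity_of_basis ℝ E Metric.uniformity_basis_dist
  rw [← image_univ] at htb
  obtain ⟨S, -, hSfin, hS⟩ := exists_subset_image_finite_and.mp
    (totallyBounded_iff_subset.mp htb _ (hbasis.mem_of_mem hε))
  obtain ⟨R, hR, hSR⟩ := hSfin.isBounded.exists_pos_norm_le
  refine ⟨2 * R, by positivity, fun x => ?_⟩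
  -- A net translate close to the translate by `x + R` yields an almost period in `[x, x + 2R]`.
  obtain ⟨_, ⟨h, hhS, rfl⟩, hclose⟩ :=
    mem_iUnion₂.mp (hS (mem_image_of_mem _ (mem_univ (x + R))))
  have hhR := abs_le.mp (hSR h hhS)
  refine ⟨x + R - h, ⟨by linarith, by linarith⟩, fun t => ?_⟩
  have hclose_t : dist (f (t - h + (x + R))) (f (t - h + h)) < ε := hclose (t - h)
  rwa [sub_add_cancel, sub_add_comm, ← add_comm t] at hclose_t

theorem AlmostPeriodic.prodMk {f : ℝ → E} {g : ℝ → F} (hf : AlmostPeriodic f)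
    (hfc : Continuous f) (hg : AlmostPeriodic g) (hgc : Continuous g) :
    AlmostPeriodic fun t => (f t, g t) := by
  refine almostPeriodic_of_totallyBounded_range_uniformTranslate
    ((((hf.totallyBounded_range_uniformTranslate (hf.uniformContinuous hfc)).prod
      (hg.totallyBounded_range_uniformTranslate (hg.uniformContinuous hgc))).image
        UniformFun.uniformEquivProdArrow.symm.uniformContinuous).subset ?_)
  rintro _ ⟨h, rfl⟩
  exact ⟨(uniformTranslate f h, uniformTranslate g h), ⟨⟨h, rfl⟩, ⟨h, rfl⟩⟩, rfl⟩

theorem AlmostPeriodic.comp_sub {f : ℝ → E} {g : ℝ → ℝ} (hf : AlmostPeriodic f)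
    (hfc : Continuous f) (hg : AlmostPeriodic g) (hgc : Continuous g) :
    AlmostPeriodic fun t => f (t - g t) := by
  intro ε hε
  obtain ⟨δ, hδ, hδf⟩ := Metric.uniformContinuous_iff.mp (hf.uniformContinuous hfc) (ε / 2)
    (by positivity)
  obtain ⟨l, hl, hT⟩ := hf.prodMk hfc hg hgc (min (ε / 2) δ) (by positivity)
  refine ⟨l, hl, fun x => ?_⟩
  obtain ⟨T, hTx, hTfg⟩ := hT x
  refine ⟨T, hTx, fun t => ?_⟩
  have hgT : dist (g (t + T)) (g t) < δ :=
    (max_lt_iff.mp (hTfg t)).2.trans_le (min_le_right _ _)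
  have hfT : dist (f (t - g t + T)) (f (t - g t)) < ε / 2 :=
    (max_lt_iff.mp (hTfg (t - g t))).1.trans_le (min_le_left _ _)
  calc dist (f (t + T - g (t + T))) (f (t - g t))
      ≤ dist (f (t + T - g (t + T))) (f (t + T - g t)) + dist (f (t + T - g t)) (f (t - g t)) :=
        dist_triangle _ _ _
    _ < ε / 2 + ε / 2 := by
        gcongr
        · exact hδf (by rwa [dist_sub_left])
        · rwa [add_sub_right_comm]
    _ = ε := add_halves ε

end AlmostPeriodic

/-- If `f` and `g` are almost periodic, then `t ↦ f (t - g t)` is almost periodic. -/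
theorem almost_periodic_comp_sub
    (f g : ℝ → ℝ) (hf : Continuous f) (hg : Continuous g)
    (hapf : ∀ ε > 0, ∃ l > 0, ∀ x : ℝ, ∃ T ∈ Set.Icc x (x + l),
      ∀ t : ℝ, |f (t + T) - f t| < ε)
    (hapg : ∀ ε > 0, ∃ l > 0, ∀ x : ℝ, ∃ T ∈ Set.Icc x (x + l),
      ∀ t : ℝ, |g (t + T) - g t| < ε) :
    ∀ ε > 0, ∃ l > 0, ∀ x : ℝ, ∃ T ∈ Set.Icc x (x + l),
      ∀ t : ℝ, |f (t + T - g (t + T)) - f (t - g t)| < ε := by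
  simp only [← Real.dist_eq] at hapf hapg ⊢
  exact AlmostPeriodic.comp_sub hapf hf hapg hg
end

section
/- If f₁, …, f_N : ℝ → ℝ are almost periodic functions, then for every ε > 0 the set of common ε-almost periods of f₁, …, f_N is relatively dense in ℝ. -/
/-!
Bohr's argument: the translates `t ↦ f (t + s)` of an almost periodic function are totally
bounded for the uniform distance. Indeed `f` is uniformly continuous, and shifting `s` by a
suitable almost period lands in a fixed compact interval `[0, l]`, which a finite `δ`-net covers.
A finite product of totally bounded families is totally bounded, so finitely many shifts `S`
approximate every `s` simultaneously for all `fᵢ`. If `|s'| ≤ M` on `S`, then for every `x`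
the shift `s = x + M` has an approximant `s' ∈ S`, and `s - s' ∈ [x, x + 2M]` is a common
almost period.
-/

open Set

def almostPeriods (f : ℝ → ℝ) (ε : ℝ) : Set ℝ := {T | ∀ t, |f (t + T) - f t| < ε}

def IsRelativelyDense (A : Set ℝ) : Prop := ∃ l > 0, ∀ x, ∃ T ∈ Icc x (x + l), T ∈ A

def IsAlmostPeriodic (f : ℝ → ℝ) : Prop := ∀ ε > 0, IsRelativelyDense (almostPeriods f ε)

namespace IsAlmostPeriodic

variable {f : ℝ → ℝ}

theorem uniformContinuous (hf : Continuous f) (hap : IsAlmostPeriodic f) :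
    UniformContinuous f := by
  rw [Metric.uniformContinuous_iff]
  intro ε hε
  obtain ⟨l, -, hdense⟩ := hap (ε / 3) (by positivity)
  obtain ⟨δ, hδ, hunif⟩ := Metric.uniformContinuousOn_iff.1
    ((isCompact_Icc (a := (-1 : ℝ)) (b := l + 1)).uniformContinuousOn_of_continuous
      hf.continuousOn)
    (ε / 3) (by positivity)
  refine ⟨min δ 1, by positivity, fun {a b} hab => ?_⟩
  rw [Real.dist_eq] at hab ⊢
  have hab₁ := abs_lt.1 (hab.trans_le (min_le_right δ 1))
  -- an almost period `τ` moves both `a` and `b` into `[-1, l + 1]`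
  obtain ⟨τ, ⟨hτ₀, hτ₁⟩, hτ⟩ := hdense (-b)
  have hmid : |f (a + τ) - f (b + τ)| < ε / 3 := by
    rw [← Real.dist_eq]
    refine hunif _ ⟨by linarith, by linarith⟩ _ ⟨by linarith, by linarith⟩ ?_
    rw [Real.dist_eq, add_sub_add_right_eq_sub]
    exact hab.trans_le (min_le_left δ 1)
  have := abs_sub_le (f a) (f (a + τ)) (f b)
  have := abs_sub_le (f (a + τ)) (f (b + τ)) (f b)
  linarith [abs_sub_comm (f a) (f (a + τ)), hτ a, hτ b]

theorem exists_finite_translate_net (hf : Continuous f) (hap : IsAlmostPeriodic f)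
    {ε : ℝ} (hε : 0 < ε) :
    ∃ S : Set ℝ, S.Finite ∧ ∀ s, ∃ s' ∈ S, ∀ t, |f (t + s) - f (t + s')| < ε := by
  obtain ⟨l, -, hdense⟩ := hap (ε / 2) (by positivity)
  obtain ⟨δ, hδ, hunif⟩ :=
    Metric.uniformContinuous_iff.1 (hap.uniformContinuous hf) (ε / 2) (by positivity)
  obtain ⟨S, hS, hcover⟩ :=
    Metric.totallyBounded_iff.1 (isCompact_Icc (a := 0) (b := l)).totallyBounded δ hδ
  refine ⟨S, hS, fun s => ?_⟩
  obtain ⟨τ, ⟨hτ₀, hτ₁⟩, hτ⟩ := hdense (-s)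
  obtain ⟨s', hs'S, hs'⟩ := mem_iUnion₂.1 (hcover ⟨by linarith, by linarith⟩ : s + τ ∈ _)
  refine ⟨s', hs'S, fun t => ?_⟩
  have hclose : |f (t + (s + τ)) - f (t + s')| < ε / 2 := by
    rw [← Real.dist_eq]
    apply hunif
    rwa [Real.dist_eq, add_sub_add_left_eq_sub, ← Real.dist_eq]
  have hshift : |f (t + s + τ) - f (t + s)| < ε / 2 := hτ (t + s)
  rw [add_assoc] at hshift
  have := abs_sub_le (f (t + s)) (f (t + (s + τ))) (f (t + s'))
  linarith [abs_sub_comm (f (t + s)) (f (t + (s + τ)))]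

end IsAlmostPeriodic

/-- The finite net is built by choosing one shift in each nonempty cell of the product of
`ε / 2`-nets of the individual functions. -/
theorem exists_finite_common_translate_net {ι : Type*} [Finite ι] {f : ι → ℝ → ℝ}
    (hnet : ∀ i, ∀ ε > 0, ∃ S : Set ℝ, S.Finite ∧
      ∀ s, ∃ s' ∈ S, ∀ t, |f i (t + s) - f i (t + s')| < ε)
    {ε : ℝ} (hε : 0 < ε) :
    ∃ S : Set ℝ, S.Finite ∧ ∀ s, ∃ s' ∈ S, ∀ i t, |f i (t + s) - f i (t + s')| < ε := by
  choose S hS c hcS hc using fun i => hnet i (ε / 2) (by positivity)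
  let cell : ℝ → ι → ℝ := fun s i => c i s
  have hcells : (range cell).Finite :=
    (Set.Finite.pi hS).subset (range_subset_iff.2 fun s i _ => hcS i s)
  refine ⟨Function.invFun cell '' range cell, hcells.image _, fun s => ?_⟩
  set s' := Function.invFun cell (cell s)
  have hcell : cell s' = cell s := Function.invFun_eq ⟨s, rfl⟩
  refine ⟨s', mem_image_of_mem _ (mem_range_self s), fun i t => ?_⟩
  have h₁ := hc i s t
  have h₂ := hc i s' t
  rw [show c i s' = c i s from congrFun hcell i] at h₂
  have := abs_sub_le (f i (t + s)) (f i (t + c i s)) (f i (t + s'))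
  rw [abs_sub_comm (f i (t + c i s))] at this
  linarith

theorem isRelativelyDense_iInter_almostPeriods_of_finite_net {ι : Type*} {f : ι → ℝ → ℝ}
    {ε : ℝ} {S : Set ℝ} (hS : S.Finite)
    (hnet : ∀ s, ∃ s' ∈ S, ∀ i t, |f i (t + s) - f i (t + s')| < ε) :
    IsRelativelyDense (⋂ i, almostPeriods (f i) ε) := by
  obtain ⟨M, hM, hSM⟩ := hS.isBounded.exists_pos_norm_le
  refine ⟨2 * M, by positivity, fun x => ?_⟩
  obtain ⟨s', hs'S, hs'⟩ := hnet (x + M)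
  have hs'M := abs_le.1 (hSM s' hs'S)
  refine ⟨x + M - s', ⟨by linarith, by linarith⟩, mem_iInter.2 fun i t => ?_⟩
  have h := hs' i (t - s')
  rw [sub_add_cancel] at h
  convert h using 4
  ring

/-- Finitely many almost periodic functions have a relatively dense set of
common `ε`-almost periods. -/
theorem common_almost_periods_relatively_dense
    (N : ℕ) (f : Fin N → ℝ → ℝ) (hf : ∀ i, Continuous (f i))
    (hap : ∀ i, ∀ ε > 0, ∃ l > 0, ∀ x : ℝ, ∃ T ∈ Set.Icc x (x + l),
      ∀ t : ℝ, |f i (t + T) - f i t| < ε) :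
    ∀ ε > 0, ∃ l > 0, ∀ x : ℝ, ∃ T ∈ Set.Icc x (x + l),
      ∀ i, ∀ t : ℝ, |f i (t + T) - f i t| < ε := by
  intro ε hε
  obtain ⟨S, hS, hnet⟩ := exists_finite_common_translate_net
    (fun i _ hδ => IsAlmostPeriodic.exists_finite_translate_net (hf i) (hap i) hδ) hε
  obtain ⟨l, hl, hdense⟩ := isRelativelyDense_iInter_almostPeriods_of_finite_net hS hnet
  refine ⟨l, hl, fun x => ?_⟩
  obtain ⟨T, hT, hmem⟩ := hdense x
  exact ⟨T, hT, mem_iInter.1 hmem⟩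
end

section
/- Halanay inequality: Let V : [−κ, ∞) → [0, ∞) be continuous with upper right Dini derivative satisfying D⁺V(t) ≤ −α·V(t) + β·sup_{t−κ ≤ s ≤ t} V(s) for all t ≥ 0, where α > β > 0 and κ > 0. Then there exists γ > 0 (the unique positive root of γ = α − β·e^{γκ}) such that V(t) ≤ (sup_{−κ ≤ s ≤ 0} V(s))·e^{−γt} for all t ≥ 0. -/
/-!
Compare `V` with `u(t) = A e^{-γt} + ε`, where `V(s) ≤ A e^{-γs}` on the initial interval.
At the time `t₁` where `V` first reaches `u` and then crosses it, `V ≤ u` on the whole delay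
window, so the Dini hypothesis gives `D⁺V(t₁) ≤ -α u(t₁) + β u(t₁ - κ) = u'(t₁) - (α - β) ε`,
while the crossing forces `D⁺V(t₁) ≥ u'(t₁)`. Hence `V ≤ u` for every `ε > 0`. The rate `γ`
comes from the intermediate value theorem applied to `θ ↦ α - θ - β e^{θκ}` on `[0, α]`.
-/

open Filter Set Topology Real

/-- `D⁺V(t)`. Where the difference quotient is unbounded above, the `limsup` takes the junk
value `0` rather than `+∞`. -/
noncomputable def upperRightDini (V : ℝ → ℝ) (t : ℝ) : ℝ :=
  limsup (fun h => (V (t + h) - V t) / h) (𝓝[>] 0)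

theorem exists_crossing_time {V u : ℝ → ℝ} {a b : ℝ} (hV : ContinuousOn V (Ici a))
    (hu : ContinuousOn u (Ici a)) (ha : V a ≤ u a) (hab : a ≤ b) (hb : u b < V b) :
    ∃ t ≥ a, (∀ s ∈ Icc a t, V s ≤ u s) ∧ V t = u t ∧ ∃ᶠ s in 𝓝[>] t, u s < V s := by
  set T := {s | a ≤ s ∧ u s < V s}
  have hTbdd : BddBelow T := ⟨a, fun s hs => hs.1⟩
  have hTne : T.Nonempty := ⟨b, hab, hb⟩
  set t := sInf T
  have hat : a ≤ t := le_csInf hTne fun s hs => hs.1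
  have hbelow : ∀ s ∈ Ico a t, V s ≤ u s := fun s hs =>
    not_lt.1 fun hlt => notMem_of_lt_csInf hs.2 hTbdd ⟨hs.1, hlt⟩
  have hcont : ∀ {s : Set ℝ}, s ⊆ Ici a → ContinuousWithinAt V s t ∧ ContinuousWithinAt u s t :=
    fun hs => ⟨(hV t hat).mono hs, (hu t hat).mono hs⟩
  have hle : V t ≤ u t := by
    rcases hat.eq_or_lt with hta | hlt
    · exact hta ▸ ha
    · exact ContinuousWithinAt.closure_le (by rw [closure_Ico hlt.ne]; exact right_mem_Icc.2 hlt.le)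
        (hcont Ico_subset_Ici_self).1 (hcont Ico_subset_Ici_self).2 hbelow
  have hfreq : ∃ᶠ s in 𝓝[>] t, u s < V s := by
    refine (nhdsGT_basis t).frequently_iff.2 fun c hc => ?_
    obtain ⟨s, hsT, hsc⟩ := exists_lt_of_csInf_lt hTne hc
    refine ⟨s, ⟨(csInf_le hTbdd hsT).lt_of_ne ?_, hsc⟩, hsT.2⟩
    rintro rfl
    exact hsT.2.not_ge hle
  refine ⟨t, hat, fun s hs => ?_, le_antisymm hle ?_, hfreq⟩
  · rcases hs.2.lt_or_eq with hlt | rfl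
    · exact hbelow s ⟨hs.1, hlt⟩
    · exact hle
  · have hsub : {s | t < s ∧ u s < V s} ⊆ Ici a := fun s hs => hat.trans hs.1.le
    refine ContinuousWithinAt.closure_le ?_ (hcont hsub).2 (hcont hsub).1 fun s hs => hs.2.le
    exact mem_closure_iff_frequently.2 ((frequently_nhdsWithin_iff.1 hfreq).mono
      fun s hs => ⟨hs.2, hs.1⟩)

theorem HasDerivAt.le_upperRightDini {V u : ℝ → ℝ} {t u' : ℝ} (hu : HasDerivAt u u' t)
    (hu' : u' ≤ 0) (ht : V t ≤ u t) (hfreq : ∃ᶠ s in 𝓝[>] t, u s < V s) :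
    u' ≤ upperRightDini V t := by
  by_cases hbdd : IsBoundedUnder (· ≤ ·) (𝓝[>] 0) (fun h => (V (t + h) - V t) / h)
  · by_contra! hlt
    obtain ⟨c, hDc, hcu'⟩ := exists_between hlt
    have hslopeV : ∀ᶠ h in 𝓝[>] (0 : ℝ), (V (t + h) - V t) / h < c :=
      eventually_lt_of_limsup_lt hDc hbdd
    have hslopeU : ∀ᶠ h in 𝓝[>] (0 : ℝ), c < h⁻¹ • (u (t + h) - u t) :=
      hu.tendsto_slope_zero_right.eventually (lt_mem_nhds hcu')
    have hfreq0 : ∃ᶠ h in 𝓝[>] (0 : ℝ), u (t + h) < V (t + h) := by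
      have : 𝓝[>] t = map (t + ·) (𝓝[>] 0) := by simp
      rwa [this, frequently_map] at hfreq
    obtain ⟨h, hcross, hVh, huh, hh⟩ :=
      (hfreq0.and_eventually (hslopeV.and (hslopeU.and self_mem_nhdsWithin))).exists
    rw [smul_eq_mul, inv_mul_eq_div] at huh
    have : (u (t + h) - u t) / h < (V (t + h) - V t) / h :=
      div_lt_div_of_pos_right (by linarith) hh
    linarith
  · rw [upperRightDini, Real.limsup_of_not_isBoundedUnder hbdd]
    exact hu'

theorem exists_pos_eq_sub_mul_exp {α β : ℝ} (κ : ℝ) (hβ : 0 < β) (hαβ : β < α) :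
    ∃ γ > 0, γ = α - β * exp (γ * κ) := by
  set f : ℝ → ℝ := fun θ => α - θ - β * exp (θ * κ)
  have hf : ContinuousOn f (Icc 0 α) := by fun_prop
  have hfα : f α < 0 := by
    have := exp_pos (α * κ)
    simp only [f]
    nlinarith
  have hf0 : 0 < f 0 := by simp [f, hαβ]
  obtain ⟨γ, hγ, hfγ⟩ := intermediate_value_Ioo' (hβ.trans hαβ).le hf ⟨hfα, hf0⟩
  exact ⟨γ, hγ.1, by simp only [f] at hfγ; linarith⟩

theorem halanay_le_mul_exp_add {κ α β γ : ℝ} (hκ : 0 ≤ κ) (hβ : 0 ≤ β) (hαβ : β < α)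
    (hγ₀ : 0 ≤ γ) (hγ : γ = α - β * exp (γ * κ)) {V : ℝ → ℝ} (hV : ContinuousOn V (Ici 0))
    (hdini : ∀ t ≥ 0, upperRightDini V t ≤ -α * V t + β * sSup (V '' Icc (t - κ) t))
    {A : ℝ} (hA : 0 ≤ A) (hinit : ∀ s ∈ Icc (-κ) 0, V s ≤ A * exp (-γ * s))
    {ε : ℝ} (hε : 0 < ε) {t : ℝ} (ht : 0 ≤ t) : V t ≤ A * exp (-γ * t) + ε := by
  set u : ℝ → ℝ := fun s => A * exp (-γ * s) + ε
  by_contra! hlt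
  obtain ⟨t₁, ht₁, hbelow, heq, hfreq⟩ := exists_crossing_time hV
    (by fun_prop : Continuous u).continuousOn
    (by simpa [u] using (hinit 0 ⟨by linarith, le_rfl⟩).trans (le_add_of_nonneg_right hε.le))
    ht hlt
  have hu_anti : Antitone u := fun s s' hss' => by
    have := exp_le_exp.2 (by nlinarith : -γ * s' ≤ -γ * s)
    simp only [u]
    nlinarith
  have hwindow : ∀ s ∈ Icc (t₁ - κ) t₁, V s ≤ u (t₁ - κ) := fun s hs => by
    refine le_trans ?_ (hu_anti hs.1)
    rcases le_or_gt s 0 with hs0 | hs0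
    · exact (hinit s ⟨by linarith [hs.1], hs0⟩).trans (by simp [u, hε.le])
    · exact hbelow s ⟨hs0.le, hs.2⟩
  have hsup : sSup (V '' Icc (t₁ - κ) t₁) ≤ u (t₁ - κ) :=
    csSup_le ((nonempty_Icc.2 (by linarith)).image V) (forall_mem_image.2 hwindow)
  have hderiv : HasDerivAt u (-γ * (A * exp (-γ * t₁))) t₁ :=
    ((((hasDerivAt_id t₁).const_mul (-γ)).exp.const_mul A).add_const ε).congr_deriv
      (by simp only [id]; ring)
  -- The choice of `γ` makes the exponential parts cancel, so only `-(α - β) ε < 0` survives.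
  have hgap : -α * u t₁ + β * u (t₁ - κ) < -γ * (A * exp (-γ * t₁)) := by
    have hsplit : exp (-γ * (t₁ - κ)) = exp (-γ * t₁) * exp (γ * κ) := by
      rw [← exp_add]; congr 1; ring
    have hγA : γ * (A * exp (-γ * t₁)) = (α - β * exp (γ * κ)) * (A * exp (-γ * t₁)) := by
      rw [← hγ]
    simp only [u, hsplit]
    nlinarith
  have hu'_nonpos : -γ * (A * exp (-γ * t₁)) ≤ 0 :=
    mul_nonpos_of_nonpos_of_nonneg (neg_nonpos.2 hγ₀) (mul_nonneg hA (exp_pos _).le)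
  refine lt_irrefl (-γ * (A * exp (-γ * t₁))) ?_
  calc -γ * (A * exp (-γ * t₁)) ≤ upperRightDini V t₁ :=
        hderiv.le_upperRightDini hu'_nonpos heq.le hfreq
    _ ≤ -α * u t₁ + β * sSup (V '' Icc (t₁ - κ) t₁) := heq ▸ hdini t₁ ht₁
    _ ≤ -α * u t₁ + β * u (t₁ - κ) := by gcongr
    _ < -γ * (A * exp (-γ * t₁)) := hgap

open Filter in
/-- Halanay inequality. -/
theorem halanay_inequality
    (κ α β : ℝ) (hκ : 0 < κ) (hβ : 0 < β) (hαβ : β < α)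
    (V : ℝ → ℝ) (hVcont : ContinuousOn V (Set.Ici (-κ)))
    (hVnonneg : ∀ t, 0 ≤ V t)
    (hdini : ∀ t ≥ 0,
      limsup (fun h => (V (t + h) - V t) / h) (nhdsWithin 0 (Set.Ioi 0))
        ≤ -α * V t + β * sSup (V '' Set.Icc (t - κ) t)) :
    ∃ γ > 0, γ = α - β * Real.exp (γ * κ) ∧
      ∀ t ≥ 0, V t ≤ sSup (V '' Set.Icc (-κ) 0) * Real.exp (-γ * t) := by
  obtain ⟨γ, hγ₀, hγ⟩ := exists_pos_eq_sub_mul_exp κ hβ hαβ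
  refine ⟨γ, hγ₀, hγ, fun t ht => ?_⟩
  set M := sSup (V '' Icc (-κ) 0)
  have hbdd : BddAbove (V '' Icc (-κ) 0) :=
    (isCompact_Icc.image_of_continuousOn (hVcont.mono Icc_subset_Ici_self)).bddAbove
  have hVM : ∀ s ∈ Icc (-κ) 0, V s ≤ M := fun s hs => le_csSup hbdd (mem_image_of_mem V hs)
  have hM : 0 ≤ M := (hVnonneg 0).trans (hVM 0 ⟨by linarith, le_rfl⟩)
  have hinit : ∀ s ∈ Icc (-κ) 0, V s ≤ M * exp (-γ * s) := fun s hs =>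
    (hVM s hs).trans (le_mul_of_one_le_right hM (one_le_exp (by nlinarith [hs.2])))
  exact le_of_forall_pos_le_add fun ε hε => halanay_le_mul_exp_add hκ.le hβ.le hαβ hγ₀.le hγ
    (hVcont.mono (Ici_subset_Ici.2 (by linarith))) hdini hM hinit hε ht
end
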